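/- arXiv:2602.02450 — 9 statements merged into one kernel-verified Lean document; each statement's English description precedes it below -/
import Mathlib

section
/- For every finite simple graph G on vertex set [n] with degree sequence d_1,...,d_n, and all nonnegative reals λ_1,...,λ_n, the multivariate independence polynomial satisfies Z_G(λ_1,...,λ_n) ≥ ∏_{i=1}^n (1 + (d_i+1)λ_i)^{1/(d_i+1)}. -/
/-!
Induct on the vertex set `A` of the induced subgraph, deleting a vertex `v` of maximum degree `d`:
`Z(A) = Z(A - v) + λ_v Z(A - N[v])`. Applying the induction hypothesis to both terms (degrees only
drop in subgraphs, and the factor `(1 + (d + 1) x) ^ (1 / (d + 1))` decreases in `d`), it suffices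
to prove an inequality involving only `λ_v` and the weights of the neighbours of `v`. It follows
from three facts: `((m y ^ (m + 1) + 1) / (m + 1)) ^ (1 / m)` decreases in `m` for `y ≥ 1`, the
geometric mean is superadditive, and Young's inequality with exponents `(d + 1) / d` and `d + 1`.
-/

open Finset Real

noncomputable def degreeFactor (d : ℕ) (x : ℝ) : ℝ :=
  (1 + ((d : ℝ) + 1) * x) ^ ((1 : ℝ) / ((d : ℝ) + 1))

section degreeFactor

variable {x : ℝ}

lemma one_le_degreeFactor (d : ℕ) (hx : 0 ≤ x) : 1 ≤ degreeFactor d x :=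
  one_le_rpow (by nlinarith [show (0 : ℝ) ≤ d from d.cast_nonneg]) (by positivity)

lemma degreeFactor_nonneg (d : ℕ) (hx : 0 ≤ x) : 0 ≤ degreeFactor d x :=
  zero_le_one.trans (one_le_degreeFactor d hx)

lemma degreeFactor_pow_succ (d : ℕ) (hx : 0 ≤ x) :
    degreeFactor d x ^ (d + 1) = 1 + ((d : ℝ) + 1) * x := by
  rw [degreeFactor, ← rpow_natCast, ← rpow_mul (by positivity)]
  push_cast
  rw [one_div_mul_cancel (by positivity), rpow_one]

lemma antitone_degreeFactor (hx : 0 ≤ x) : Antitone (degreeFactor · x) := by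
  intro d e hde
  have hde' : (d : ℝ) + 1 ≤ e + 1 := by exact_mod_cast Nat.succ_le_succ hde
  have bernoulli : (1 + ((e : ℝ) + 1) * x) ^ (((d : ℝ) + 1) / (e + 1)) ≤ 1 + ((d : ℝ) + 1) * x := by
    convert rpow_one_add_le_one_add_mul_self (s := ((e : ℝ) + 1) * x) (by nlinarith)
      (p := ((d : ℝ) + 1) / (e + 1)) (by positivity) ((div_le_one (by positivity)).2 hde') using 2
    field_simp
  calc degreeFactor e x
      = ((1 + ((e : ℝ) + 1) * x) ^ (((d : ℝ) + 1) / (e + 1))) ^ ((1 : ℝ) / ((d : ℝ) + 1)) := by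
        rw [degreeFactor, ← rpow_mul (by positivity)]
        congr 1
        field_simp
    _ ≤ degreeFactor d x := by unfold degreeFactor; gcongr

end degreeFactor

-- Bernoulli's inequality for `(y ^ (m + k + 1)) ^ (m / (m + k + 1))`.
lemma succ_add_mul_pow_le {y : ℝ} (hy : 0 ≤ y) (m k : ℕ) :
    ((m : ℝ) + k + 1) * y ^ m ≤ m * y ^ (m + k + 1) + (k + 1) := by
  have hn : (0 : ℝ) < m + k + 1 := by positivity
  have hroot : (y ^ (m + k + 1)) ^ ((m : ℝ) / (m + k + 1)) = y ^ m := by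
    rw [← rpow_natCast, ← rpow_mul hy, ← rpow_natCast]
    push_cast
    field_simp
  have h := rpow_one_add_le_one_add_mul_self (s := y ^ (m + k + 1) - 1)
    (by linarith [pow_nonneg hy (m + k + 1)]) (p := m / ((m : ℝ) + k + 1)) (by positivity)
    ((div_le_one hn).2 (by linarith [(k.cast_nonneg : (0 : ℝ) ≤ k)]))
  rw [add_sub_cancel, hroot] at h
  have := mul_le_mul_of_nonneg_left h hn.le
  rw [mul_add, mul_one, ← mul_assoc, mul_div_cancel₀ _ hn.ne'] at this
  linarith

lemma cross_mul_le {y : ℝ} (hy : 0 ≤ y) {k d : ℕ} (hkd : k ≤ d) :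
    ((d : ℝ) + 1) * y ^ d * (k * y ^ (k + 1) + 1)
      ≤ ((k : ℝ) + 1) * y ^ k * (d * y ^ (d + 1) + 1) := by
  obtain ⟨m, rfl⟩ := Nat.exists_eq_add_of_le' hkd
  have key := mul_le_mul_of_nonneg_left (succ_add_mul_pow_le hy m k) (pow_nonneg hy k)
  push_cast
  ring_nf at key ⊢
  linarith

lemma hasDerivAt_log_mul_pow_succ_add_one_div {m : ℕ} (hm : m ≠ 0) {y : ℝ} (hy : 0 ≤ y) :
    HasDerivAt (fun t => log (m * t ^ (m + 1) + 1) / m)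
      ((m + 1) * y ^ m / (m * y ^ (m + 1) + 1)) y := by
  have hpos : (0 : ℝ) < m * y ^ (m + 1) + 1 := by positivity
  refine ((((hasDerivAt_pow (m + 1) y).const_mul (m : ℝ)).add_const 1).log hpos.ne').div_const
    (m : ℝ) |>.congr_deriv ?_
  rw [Nat.add_sub_cancel]
  push_cast
  field_simp

-- Taking logarithms, the difference of the two sides is a function of `y` that vanishes at `1`
-- and whose derivative is nonnegative by `cross_mul_le`.
lemma mean_pow_succ_rpow_inv_le {k d : ℕ} (hk : k ≠ 0) (hkd : k ≤ d) {y : ℝ} (hy : 1 ≤ y) :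
    (((d : ℝ) * y ^ (d + 1) + 1) / (d + 1)) ^ (d : ℝ)⁻¹
      ≤ (((k : ℝ) * y ^ (k + 1) + 1) / (k + 1)) ^ (k : ℝ)⁻¹ := by
  have hd : d ≠ 0 := by omega
  set F : ℝ → ℝ := fun t => log (k * t ^ (k + 1) + 1) / k - log (d * t ^ (d + 1) + 1) / d
  have hF : ∀ t, 0 ≤ t → HasDerivAt F
      ((k + 1) * t ^ k / (k * t ^ (k + 1) + 1) - (d + 1) * t ^ d / (d * t ^ (d + 1) + 1)) t :=
    fun t ht => (hasDerivAt_log_mul_pow_succ_add_one_div hk ht).sub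
      (hasDerivAt_log_mul_pow_succ_add_one_div hd ht)
  have hmono : MonotoneOn F (Set.Ici 0) := by
    refine monotoneOn_of_hasDerivWithinAt_nonneg (convex_Ici 0)
      (fun t ht => (hF t ht).continuousAt.continuousWithinAt)
      (fun t ht => (hF t (interior_subset ht)).hasDerivWithinAt) fun t ht => ?_
    have ht : 0 ≤ t := interior_subset ht
    rw [sub_nonneg, div_le_div_iff₀ (by positivity) (by positivity)]
    exact cross_mul_le ht hkd
  have hF1 : F 1 ≤ F y :=
    hmono (Set.mem_Ici.2 zero_le_one) (Set.mem_Ici.2 (zero_le_one.trans hy)) hy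
  simp only [F, one_pow, mul_one] at hF1
  rw [rpow_def_of_pos (by positivity), rpow_def_of_pos (by positivity), exp_le_exp,
    log_div (by positivity) (by positivity), log_div (by positivity) (by positivity)]
  rw [← div_eq_mul_inv, ← div_eq_mul_inv, sub_div, sub_div]
  linarith

lemma geom_mean_add_le {ι : Type*} {s : Finset ι} (hs : s.Nonempty) {a b : ι → ℝ}
    (ha : ∀ i ∈ s, 0 ≤ a i) (hb : ∀ i ∈ s, 0 ≤ b i) :
    (∏ i ∈ s, a i) ^ (#s : ℝ)⁻¹ + (∏ i ∈ s, b i) ^ (#s : ℝ)⁻¹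
      ≤ (∏ i ∈ s, (a i + b i)) ^ (#s : ℝ)⁻¹ := by
  set w : ℝ := (#s : ℝ)⁻¹
  have hw : w ≠ 0 := inv_ne_zero (by exact_mod_cast hs.card_pos.ne')
  have hwsum : ∑ _i ∈ s, w = 1 := by
    rw [sum_const, nsmul_eq_mul]
    exact mul_inv_cancel₀ (by exact_mod_cast hs.card_pos.ne')
  by_cases! hzero : ∃ i ∈ s, a i + b i = 0
  · obtain ⟨i, hi, h0⟩ := hzero
    rw [prod_eq_zero hi (by linarith [ha i hi, hb i hi]),
      prod_eq_zero hi (by linarith [ha i hi, hb i hi]), zero_rpow hw, add_zero]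
    exact rpow_nonneg (prod_nonneg fun j hj => add_nonneg (ha j hj) (hb j hj)) _
  have hc : ∀ i ∈ s, 0 < a i + b i :=
    fun i hi => lt_of_le_of_ne (add_nonneg (ha i hi) (hb i hi)) (hzero i hi).symm
  have amgm : ∀ f : ι → ℝ, (∀ i ∈ s, 0 ≤ f i) → (∏ i ∈ s, f i) ^ w ≤ ∑ i ∈ s, w * f i :=
    fun f hf => by
      rw [← finsetProd_rpow s f hf]
      exact geom_mean_le_arith_mean_weighted s (fun _ => w) f (fun _ _ => by positivity) hwsum hf
  have hsplit : ∀ f : ι → ℝ, (∀ i ∈ s, 0 ≤ f i) → (∏ i ∈ s, f i / (a i + b i)) ^ w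
      = (∏ i ∈ s, f i) ^ w / (∏ i ∈ s, (a i + b i)) ^ w := fun f hf => by
    rw [prod_div_distrib, div_rpow (prod_nonneg hf) (prod_nonneg fun i hi => (hc i hi).le)]
  have hsum : ∑ i ∈ s, w * (a i / (a i + b i)) + ∑ i ∈ s, w * (b i / (a i + b i)) = 1 := by
    rw [← sum_add_distrib, ← hwsum]
    refine sum_congr rfl fun i hi => ?_
    rw [← mul_add, ← add_div, div_self (hc i hi).ne', mul_one]
  have key := add_le_add (amgm _ fun i hi => div_nonneg (ha i hi) (hc i hi).le)
    (amgm _ fun i hi => div_nonneg (hb i hi) (hc i hi).le)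
  rw [hsplit a ha, hsplit b hb, hsum, ← add_div,
    div_le_one (rpow_pos_of_pos (prod_pos hc) _)] at key
  exact key

lemma mean_geom_mean_le_prod_rpow {ι : Type*} {s : Finset ι} (hs : s.Nonempty) {z : ι → ℝ}
    (hz : ∀ i ∈ s, 0 ≤ z i) :
    (#s * (∏ i ∈ s, z i) ^ (#s : ℝ)⁻¹ + 1) / (#s + 1)
      ≤ ∏ i ∈ s, ((#s * z i + 1) / (#s + 1)) ^ (#s : ℝ)⁻¹ := by
  have hd : #s ≠ 0 := hs.card_pos.ne'
  have hmink := geom_mean_add_le hs (a := fun i => #s * z i) (b := fun _ => 1)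
    (fun i hi => mul_nonneg (by positivity) (hz i hi)) (fun _ _ => zero_le_one)
  rw [prod_mul_distrib, prod_const, mul_rpow (by positivity) (prod_nonneg hz),
    pow_rpow_inv_natCast (by positivity) hd, prod_const_one, one_rpow] at hmink
  rw [finsetProd_rpow _ _ fun i hi => by have := hz i hi; positivity, prod_div_distrib, prod_const,
    div_rpow (prod_nonneg fun i hi => by have := hz i hi; positivity) (by positivity),
    pow_rpow_inv_natCast (by positivity) hd]
  gcongr

lemma mul_le_mean_rpow_add_pow {d : ℕ} (hd : d ≠ 0) {p t : ℝ} (hp : 0 ≤ p) (ht : 0 ≤ t) :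
    p * t ≤ (d * (p ^ (d + 1)) ^ (d : ℝ)⁻¹ + t ^ (d + 1)) / (d + 1) := by
  have hd' : (0 : ℝ) < d := by positivity
  have hconj : ((d + 1) / d : ℝ).HolderConjugate (d + 1) :=
    ⟨by field_simp, by positivity, by positivity⟩
  have := young_inequality_of_nonneg hp ht hconj
  rw [← rpow_natCast p, ← rpow_mul hp, ← rpow_natCast t]
  convert this using 1
  push_cast
  field_simp

lemma degreeFactor_eq_mean_pow_succ_rpow_inv {j : ℕ} {a : ℝ} (ha : 0 ≤ a) :
    degreeFactor j a = ((((j + 1 : ℕ) : ℝ) * degreeFactor (j + 1) a ^ (j + 1 + 1) + 1)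
      / ((j + 1 : ℕ) + 1)) ^ ((j + 1 : ℕ) : ℝ)⁻¹ := by
  rw [degreeFactor_pow_succ _ ha, degreeFactor, one_div]
  push_cast
  congr 1
  field_simp
  ring

-- The local inequality at a vertex of maximum degree `#s` with neighbourhood `s`; `j u + 1` is the
-- degree of the neighbour `u`.
lemma degreeFactor_mul_prod_le {ι : Type*} (s : Finset ι) (j : ι → ℕ) {a : ι → ℝ} {x : ℝ}
    (hj : ∀ u ∈ s, j u + 1 ≤ #s) (ha : ∀ u ∈ s, 0 ≤ a u) (hx : 0 ≤ x) :
    degreeFactor #s x * ∏ u ∈ s, degreeFactor (j u + 1) (a u)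
      ≤ ∏ u ∈ s, degreeFactor (j u) (a u) + x := by
  rcases s.eq_empty_or_nonempty with rfl | hs
  · simp [degreeFactor]
  set d := #s
  have hd : d ≠ 0 := hs.card_pos.ne'
  set y : ι → ℝ := fun u => degreeFactor (j u + 1) (a u)
  have hy : ∀ u ∈ s, 1 ≤ y u := fun u hu => one_le_degreeFactor _ (ha u hu)
  have hroot : ∀ u ∈ s, ((d * y u ^ (d + 1) + 1) / (d + 1)) ^ (d : ℝ)⁻¹
      ≤ degreeFactor (j u) (a u) := fun u hu => by
    rw [degreeFactor_eq_mean_pow_succ_rpow_inv (ha u hu)]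
    exact mean_pow_succ_rpow_inv_le (Nat.succ_ne_zero _) (hj u hu) (hy u hu)
  have hmean := mean_geom_mean_le_prod_rpow hs (z := fun u => y u ^ (d + 1))
    fun u hu => by have := hy u hu; positivity
  have hyoung := mul_le_mean_rpow_add_pow hd (p := ∏ u ∈ s, y u)
    (prod_nonneg fun u hu => by linarith [hy u hu])
    (degreeFactor_nonneg d hx)
  rw [degreeFactor_pow_succ d hx, ← prod_pow] at hyoung
  calc degreeFactor d x * ∏ u ∈ s, y u
      ≤ (d * (∏ u ∈ s, y u ^ (d + 1)) ^ (d : ℝ)⁻¹ + 1) / (d + 1) + x := by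
        rw [mul_comm]
        convert hyoung using 1
        field_simp
        ring
    _ ≤ ∏ u ∈ s, degreeFactor (j u) (a u) + x := by
        gcongr
        exact hmean.trans (prod_le_prod (fun u hu => by have := hy u hu; positivity) hroot)

namespace SimpleGraph

variable {V : Type*}

noncomputable def indepPoly (G : SimpleGraph V) [DecidableRel G.Adj] (lam : V → ℝ) (A : Finset V) :
    ℝ :=
  ∑ I ∈ A.powerset with ∀ u ∈ I, ∀ v ∈ I, ¬ G.Adj u v, ∏ v ∈ I, lam v

def degreeWithin (G : SimpleGraph V) [DecidableRel G.Adj] (A : Finset V) (v : V) : ℕ :=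
  #{u ∈ A | G.Adj v u}

variable {G : SimpleGraph V}

lemma forall_mem_insert_not_adj_iff [DecidableEq V] {v : V} {t : Finset V} :
    (∀ u ∈ insert v t, ∀ w ∈ insert v t, ¬ G.Adj u w)
      ↔ (∀ u ∈ t, ¬ G.Adj v u) ∧ ∀ u ∈ t, ∀ w ∈ t, ¬ G.Adj u w := by
  simp only [mem_insert, forall_eq_or_imp, G.irrefl, not_false_eq_true, true_and]
  exact ⟨fun h => ⟨h.1, fun u hu => (h.2 u hu).2⟩,
    fun h => ⟨h.1, fun u hu => ⟨fun huv => h.1 u hu huv.symm, h.2 u hu⟩⟩⟩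

variable [DecidableRel G.Adj]

@[simp]
lemma indepPoly_empty (lam : V → ℝ) : G.indepPoly lam ∅ = 1 := by
  rw [indepPoly, powerset_empty, filter_singleton, if_pos (by simp), sum_singleton, prod_empty]

lemma indepPoly_insert [DecidableEq V] (lam : V → ℝ) {v : V} {B : Finset V} (hv : v ∉ B) :
    G.indepPoly lam (insert v B)
      = G.indepPoly lam B + lam v * G.indepPoly lam {u ∈ B | ¬ G.Adj v u} := by
  simp only [indepPoly, sum_filter]
  rw [sum_powerset_insert hv, mul_sum]
  congr 1
  rw [← sum_subset (powerset_mono.2 (filter_subset (fun u => ¬ G.Adj v u) B))]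
  · refine sum_congr rfl fun t ht => ?_
    have htC := mem_powerset.1 ht
    have hvt : v ∉ t := fun h => hv (mem_filter.1 (htC h)).1
    have hnadj : ∀ u ∈ t, ¬ G.Adj v u := fun u hu => (mem_filter.1 (htC hu)).2
    rw [prod_insert hvt, mul_ite, mul_zero]
    exact if_congr (forall_mem_insert_not_adj_iff.trans (and_iff_right hnadj)) rfl rfl
  · intro t htB htC
    refine if_neg fun hind => htC ?_
    have hnadj := (forall_mem_insert_not_adj_iff.1 hind).1
    exact (mem_powerset.2 fun u hu => mem_filter.2 ⟨mem_powerset.1 htB hu, hnadj u hu⟩)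

lemma degreeWithin_mono {A B : Finset V} (h : A ⊆ B) (u : V) :
    G.degreeWithin A u ≤ G.degreeWithin B u :=
  card_le_card (filter_subset_filter _ h)

lemma degreeWithin_insert_of_adj [DecidableEq V] {u v : V} {B : Finset V} (hv : v ∉ B)
    (h : G.Adj u v) :
    G.degreeWithin (insert v B) u = G.degreeWithin B u + 1 := by
  rw [degreeWithin, filter_insert, if_pos h,
    card_insert_of_notMem fun h' => hv (mem_filter.1 h').1]
  rfl

lemma degreeWithin_insert_self [DecidableEq V] {v : V} {B : Finset V} :
    G.degreeWithin (insert v B) v = #{u ∈ B | G.Adj v u} := by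
  rw [degreeWithin, filter_insert, if_neg G.irrefl]

lemma prod_degreeFactor_insert_le [DecidableEq V] {lam : V → ℝ} (hlam : ∀ v, 0 ≤ lam v)
    {v : V} {B : Finset V} (hvB : v ∉ B)
    (hmax : ∀ u ∈ B, G.degreeWithin (insert v B) u ≤ G.degreeWithin (insert v B) v) :
    ∏ u ∈ insert v B, degreeFactor (G.degreeWithin (insert v B) u) (lam u)
      ≤ ∏ u ∈ B, degreeFactor (G.degreeWithin B u) (lam u)
        + lam v * ∏ u ∈ B with ¬ G.Adj v u, degreeFactor (G.degreeWithin B u) (lam u) := by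
  set N := {u ∈ B | G.Adj v u}
  set C := {u ∈ B | ¬ G.Adj v u}
  have hdegN : ∀ u ∈ N, G.degreeWithin (insert v B) u = G.degreeWithin B u + 1 :=
    fun u hu => degreeWithin_insert_of_adj hvB (mem_filter.1 hu).2.symm
  have hsplit : ∏ u ∈ B, degreeFactor (G.degreeWithin (insert v B) u) (lam u)
      ≤ (∏ u ∈ N, degreeFactor (G.degreeWithin B u + 1) (lam u))
        * ∏ u ∈ C, degreeFactor (G.degreeWithin B u) (lam u) := by
    rw [← prod_filter_mul_prod_filter_not B (G.Adj v)]
    refine mul_le_mul (prod_le_prod (fun u _ => degreeFactor_nonneg _ (hlam u)) fun u hu => ?_)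
      (prod_le_prod (fun u _ => degreeFactor_nonneg _ (hlam u)) fun u _ => ?_)
      (prod_nonneg fun u _ => degreeFactor_nonneg _ (hlam u))
      (prod_nonneg fun u _ => degreeFactor_nonneg _ (hlam u))
    · rw [hdegN u hu]
    · exact antitone_degreeFactor (hlam u) (degreeWithin_mono (subset_insert v B) u)
  have hlocal := degreeFactor_mul_prod_le N (G.degreeWithin B) (a := lam) (x := lam v)
    (fun u hu => by
      rw [← hdegN u hu, ← degreeWithin_insert_self]
      exact hmax u (mem_filter.1 hu).1)
    (fun u _ => hlam u) (hlam v)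
  calc ∏ u ∈ insert v B, degreeFactor (G.degreeWithin (insert v B) u) (lam u)
      = degreeFactor #N (lam v)
          * ∏ u ∈ B, degreeFactor (G.degreeWithin (insert v B) u) (lam u) := by
        rw [prod_insert hvB, degreeWithin_insert_self]
    _ ≤ degreeFactor #N (lam v) * ((∏ u ∈ N, degreeFactor (G.degreeWithin B u + 1) (lam u))
          * ∏ u ∈ C, degreeFactor (G.degreeWithin B u) (lam u)) :=
        mul_le_mul_of_nonneg_left hsplit (degreeFactor_nonneg _ (hlam v))
    _ ≤ (∏ u ∈ N, degreeFactor (G.degreeWithin B u) (lam u) + lam v)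
          * ∏ u ∈ C, degreeFactor (G.degreeWithin B u) (lam u) := by
        rw [← mul_assoc]
        exact mul_le_mul_of_nonneg_right hlocal
          (prod_nonneg fun u _ => degreeFactor_nonneg _ (hlam u))
    _ = ∏ u ∈ B, degreeFactor (G.degreeWithin B u) (lam u)
          + lam v * ∏ u ∈ C, degreeFactor (G.degreeWithin B u) (lam u) := by
        rw [← prod_filter_mul_prod_filter_not B (G.Adj v)]
        ring

lemma prod_degreeFactor_le_indepPoly [DecidableEq V] {lam : V → ℝ} (hlam : ∀ v, 0 ≤ lam v)
    (A : Finset V) :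
    ∏ v ∈ A, degreeFactor (G.degreeWithin A v) (lam v) ≤ G.indepPoly lam A := by
  induction A using Finset.strongInduction with
  | H A ih =>
  rcases A.eq_empty_or_nonempty with rfl | hA
  · simp
  obtain ⟨v, hv, hmax⟩ := exists_max_image A (G.degreeWithin A) hA
  obtain ⟨B, hvB, rfl⟩ : ∃ B, v ∉ B ∧ A = insert v B :=
    ⟨A.erase v, notMem_erase v A, (insert_erase hv).symm⟩
  have hC := ih _ (ssubset_insert hvB |>.trans_le' (filter_subset (fun u => ¬ G.Adj v u) B))
  calc ∏ u ∈ insert v B, degreeFactor (G.degreeWithin (insert v B) u) (lam u)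
      ≤ ∏ u ∈ B, degreeFactor (G.degreeWithin B u) (lam u)
          + lam v * ∏ u ∈ B with ¬ G.Adj v u, degreeFactor (G.degreeWithin B u) (lam u) :=
        prod_degreeFactor_insert_le hlam hvB fun u hu => hmax u (mem_insert_of_mem hu)
    _ ≤ G.indepPoly lam B + lam v * G.indepPoly lam {u ∈ B | ¬ G.Adj v u} := by
        gcongr ?_ + lam v * ?_
        · exact ih B (ssubset_insert hvB)
        · exact hlam v
        · refine (prod_le_prod (fun u _ => ?_) fun u _ => ?_).trans hC
          · exact degreeFactor_nonneg _ (hlam u)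
          · exact antitone_degreeFactor (hlam u) (degreeWithin_mono (filter_subset _ B) u)
    _ = G.indepPoly lam (insert v B) := (indepPoly_insert lam hvB).symm

end SimpleGraph

theorem stmt_0 (n : ℕ) (G : SimpleGraph (Fin n)) [DecidableRel G.Adj]
    (lam : Fin n → ℝ) (hlam : ∀ i, 0 ≤ lam i) :
    (∑ I ∈ Finset.univ.filter
        (fun I : Finset (Fin n) => ∀ u ∈ I, ∀ v ∈ I, ¬ G.Adj u v),
      ∏ v ∈ I, lam v)
    ≥ ∏ i, (1 + ((G.degree i : ℝ) + 1) * lam i) ^ ((1 : ℝ) / ((G.degree i : ℝ) + 1)) := by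
  have hdeg : ∀ i, G.degreeWithin univ i = G.degree i := fun i => by
    rw [SimpleGraph.degreeWithin, ← G.card_neighborFinset_eq_degree, G.neighborFinset_eq_filter]
  have h := G.prod_degreeFactor_le_indepPoly hlam univ
  simp only [hdeg, degreeFactor, SimpleGraph.indepPoly, powerset_univ] at h
  rw [ge_iff_le]
  -- The statement decides the independence predicate by `Nat.decidableForallFin`.
  convert h using 3
end

section
/- Let Δ ≥ 1 be an integer, let d_1,...,d_Δ be integers with 1 ≤ d_i ≤ Δ, and let λ_0, λ_1,...,λ_Δ be nonnegative reals. Then ∏_{i=1}^Δ (1 + d_i λ_i)^{1/d_i} + λ_0 ≥ (1 + (Δ+1)λ_0)^{1/(Δ+1)} · ∏_{i=1}^Δ (1 + (d_i+1)λ_i)^{1/(d_i+1)}. -/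
/-!
Put `a = (1 + d λ)^(1/d) ≥ 1`, so that `1 + (d + 1) λ = ((d + 1) a^d - 1) / d`. For fixed `a ≥ 1`
the quantity `(((n + 1) a^n - 1) / n)^(1/(n+1))` increases with `n`: comparing consecutive terms
is a one-variable inequality in `a`, equality at `a = 1`, whose logarithmic derivative has the sign
of Bernoulli's inequality. Taking `n = Δ` gives `1 + Δ b_i^(Δ+1) ≤ (Δ + 1) a_i^Δ` with
`b_i = (1 + (d_i + 1) λ_i)^(1/(d_i+1))`. Superadditivity of the geometric mean over the `Δ`
indices turns this into `1 + Δ (∏ b_i)^((Δ+1)/Δ) ≤ (Δ + 1) ∏ a_i`, and weighted AM-GM with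
weights `1/(Δ+1)`, `Δ/(Δ+1)` applied to `1 + (Δ + 1) λ_0` and `(∏ b_i)^((Δ+1)/Δ)` concludes.
-/

open Finset

/-- If `x ^ n = 1 + n * t` then `raise n x = 1 + (n + 1) * t` (see `raise_rpow_inv`). -/
noncomputable def raise (n : ℕ) (x : ℝ) : ℝ := (((n : ℝ) + 1) * x ^ n - 1) / n

lemma raise_one {n : ℕ} (hn : n ≠ 0) : raise n 1 = 1 := by
  rw [raise, one_pow, mul_one, add_sub_cancel_right, div_self (Nat.cast_ne_zero.mpr hn)]

lemma one_le_raise {n : ℕ} (hn : n ≠ 0) {x : ℝ} (hx : 1 ≤ x) : 1 ≤ raise n x := by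
  have hn' : (0 : ℝ) < n := by positivity
  have : (1 : ℝ) ≤ x ^ n := one_le_pow₀ hx
  rw [raise, le_div_iff₀ hn']
  nlinarith

lemma hasDerivAt_raise {n : ℕ} (hn : n ≠ 0) (x : ℝ) :
    HasDerivAt (raise n) (((n : ℝ) + 1) * x ^ (n - 1)) x := by
  have := (((hasDerivAt_pow n x).const_mul ((n : ℝ) + 1)).sub_const 1).div_const (n : ℝ)
  have hn' : (n : ℝ) ≠ 0 := Nat.cast_ne_zero.mpr hn
  rwa [mul_left_comm, mul_div_cancel_left₀ _ hn'] at this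

lemma raise_succ_le_mul_raise {k : ℕ} (hk : k ≠ 0) {x : ℝ} (hx : -1 ≤ x) :
    raise (k + 1) x ≤ x * raise k x := by
  have hbern := one_add_mul_le_pow (by linarith : (-2 : ℝ) ≤ x - 1) (k + 1)
  have hk' : (0 : ℝ) < k := by positivity
  rw [add_sub_cancel] at hbern
  simp only [raise]
  push_cast at hbern ⊢
  rw [mul_div_assoc', div_le_div_iff₀ (by positivity) hk']
  rw [pow_succ] at hbern ⊢
  nlinarith

lemma monotoneOn_log_raise_succ_sub_log_raise {k : ℕ} (hk : k ≠ 0) :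
    MonotoneOn (fun x => ((k : ℝ) + 1) * Real.log (raise (k + 1) x)
      - ((k : ℝ) + 2) * Real.log (raise k x)) (Set.Ici 1) := by
  have hpos : ∀ n ≠ 0, ∀ x ∈ Set.Ici (1 : ℝ), 0 < raise n x := fun n hn x hx =>
    zero_lt_one.trans_le (one_le_raise hn hx)
  have hderiv : ∀ x ∈ Set.Ici (1 : ℝ), HasDerivAt
      (fun x => ((k : ℝ) + 1) * Real.log (raise (k + 1) x) - ((k : ℝ) + 2) * Real.log (raise k x))
      (((k : ℝ) + 1) * ((((k + 1 : ℕ) : ℝ) + 1) * x ^ k / raise (k + 1) x)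
        - ((k : ℝ) + 2) * (((k : ℝ) + 1) * x ^ (k - 1) / raise k x)) x := fun x hx =>
    (((hasDerivAt_raise k.succ_ne_zero x).log (hpos _ k.succ_ne_zero x hx).ne').const_mul _).sub
      (((hasDerivAt_raise hk x).log (hpos k hk x hx).ne').const_mul _)
  refine monotoneOn_of_hasDerivWithinAt_nonneg (convex_Ici 1)
    (fun x hx => (hderiv x hx).continuousAt.continuousWithinAt)
    (fun x hx => (hderiv x (interior_subset hx)).hasDerivWithinAt) fun x hx => ?_
  rw [interior_Ici] at hx
  have hx1 : (1 : ℝ) ≤ x := hx.le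
  have hR := hpos k hk x hx1
  have hR' := hpos _ k.succ_ne_zero x hx1
  have hxk : x ^ k = x * x ^ (k - 1) := by
    rw [← pow_succ', Nat.sub_add_cancel (Nat.one_le_iff_ne_zero.mpr hk)]
  -- the derivative has the sign of `x * raise k x - raise (k + 1) x`
  have key := raise_succ_le_mul_raise hk (by linarith : (-1 : ℝ) ≤ x)
  rw [sub_nonneg, mul_div_assoc', mul_div_assoc', div_le_div_iff₀ hR hR', hxk]
  push_cast
  have hc : (0 : ℝ) ≤ ((k : ℝ) + 1) * ((k : ℝ) + 2) * x ^ (k - 1) := by positivity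
  nlinarith [mul_le_mul_of_nonneg_left key hc]

lemma raise_pow_le_raise_succ_pow {k : ℕ} (hk : k ≠ 0) {a : ℝ} (ha : 1 ≤ a) :
    raise k a ^ (k + 2) ≤ raise (k + 1) a ^ (k + 1) := by
  have hlog := monotoneOn_log_raise_succ_sub_log_raise hk Set.self_mem_Ici ha ha
  simp only [raise_one hk, raise_one k.succ_ne_zero, Real.log_one, mul_zero, sub_zero] at hlog
  have hA := one_le_raise hk ha
  have hB := one_le_raise k.succ_ne_zero ha
  rw [← Real.log_le_log_iff (by positivity) (by positivity), Real.log_pow, Real.log_pow]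
  push_cast
  linarith

lemma rpow_inv_le_rpow_inv_of_pow_le_pow {u v : ℝ} (hu : 0 ≤ u) (hv : 0 ≤ v) {m n : ℕ}
    (hm : m ≠ 0) (hn : n ≠ 0) (h : u ^ n ≤ v ^ m) : u ^ (m⁻¹ : ℝ) ≤ v ^ (n⁻¹ : ℝ) := by
  rw [← pow_le_pow_iff_left₀ (by positivity) (by positivity) (mul_ne_zero hm hn), pow_mul,
    Real.rpow_inv_natCast_pow hu hm, mul_comm, pow_mul, Real.rpow_inv_natCast_pow hv hn]
  exact h

lemma monotoneOn_raise_rpow {a : ℝ} (ha : 1 ≤ a) :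
    MonotoneOn (fun n : ℕ => raise n a ^ ((1 : ℝ) / ((n : ℝ) + 1))) (Set.Ici 1) := by
  refine monotoneOn_nat_Ici_of_le_succ fun k hk => ?_
  have hk0 : k ≠ 0 := Nat.one_le_iff_ne_zero.mp hk
  simp only [one_div, ← Nat.cast_succ]
  exact rpow_inv_le_rpow_inv_of_pow_le_pow (zero_le_one.trans (one_le_raise hk0 ha))
    (zero_le_one.trans (one_le_raise k.succ_ne_zero ha)) k.succ_ne_zero (k + 1).succ_ne_zero
    (raise_pow_le_raise_succ_pow hk0 ha)

lemma raise_rpow_inv {d : ℕ} (hd : d ≠ 0) {t : ℝ} (ht : 0 ≤ 1 + d * t) :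
    raise d ((1 + d * t) ^ ((1 : ℝ) / d)) = 1 + (d + 1) * t := by
  have hd' : (d : ℝ) ≠ 0 := Nat.cast_ne_zero.mpr hd
  rw [raise, one_div, Real.rpow_inv_natCast_pow ht hd]
  field_simp
  ring

lemma one_add_mul_pow_succ_le {d n : ℕ} (hd : 1 ≤ d) (hdn : d ≤ n) {t : ℝ} (ht : 0 ≤ t) :
    1 + n * ((1 + ((d : ℝ) + 1) * t) ^ ((1 : ℝ) / ((d : ℝ) + 1))) ^ (n + 1)
      ≤ ((n : ℝ) + 1) * ((1 + (d : ℝ) * t) ^ ((1 : ℝ) / (d : ℝ))) ^ n := by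
  have hd0 : d ≠ 0 := Nat.one_le_iff_ne_zero.mp hd
  have hn0 : n ≠ 0 := Nat.one_le_iff_ne_zero.mp (hd.trans hdn)
  have hdt : 1 ≤ 1 + (d : ℝ) * t := le_add_of_nonneg_right (by positivity)
  set a := (1 + (d : ℝ) * t) ^ ((1 : ℝ) / (d : ℝ)) with ha_def
  have ha : 1 ≤ a := Real.one_le_rpow hdt (by positivity)
  have hmono : raise d a ^ ((1 : ℝ) / ((d : ℝ) + 1)) ≤ raise n a ^ ((1 : ℝ) / ((n : ℝ) + 1)) :=
    monotoneOn_raise_rpow ha (Set.mem_Ici.mpr hd) (Set.mem_Ici.mpr (hd.trans hdn)) hdn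
  rw [ha_def, raise_rpow_inv hd0 (zero_le_one.trans hdt), ← ha_def] at hmono
  have hraise : 0 ≤ raise n a := zero_le_one.trans (one_le_raise hn0 ha)
  calc 1 + n * ((1 + ((d : ℝ) + 1) * t) ^ ((1 : ℝ) / ((d : ℝ) + 1))) ^ (n + 1)
      ≤ 1 + n * (raise n a ^ ((1 : ℝ) / ((n : ℝ) + 1))) ^ (n + 1) := by gcongr
    _ = ((n : ℝ) + 1) * a ^ n := by
      rw [one_div, ← Nat.cast_succ, Real.rpow_inv_natCast_pow hraise n.succ_ne_zero, raise]
      push_cast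
      field_simp
      ring

theorem Real.prod_rpow_add_prod_rpow_le {ι : Type*} (s : Finset ι) {w x y : ι → ℝ}
    (hw : ∀ i ∈ s, 0 ≤ w i) (hw₁ : ∑ i ∈ s, w i = 1) (hx : ∀ i ∈ s, 0 ≤ x i)
    (hy : ∀ i ∈ s, 0 < y i) :
    ∏ i ∈ s, x i ^ w i + ∏ i ∈ s, y i ^ w i ≤ ∏ i ∈ s, (x i + y i) ^ w i := by
  have hxy : ∀ i ∈ s, 0 < x i + y i := fun i hi => add_pos_of_nonneg_of_pos (hx i hi) (hy i hi)
  have hT : 0 < ∏ i ∈ s, (x i + y i) ^ w i :=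
    prod_pos fun i hi => Real.rpow_pos_of_pos (hxy i hi) _
  -- AM-GM applied to the two families `x / (x + y)` and `y / (x + y)`, which sum to `1`
  have hgm : ∀ z : ι → ℝ, (∀ i ∈ s, 0 ≤ z i) →
      (∏ i ∈ s, z i ^ w i) / ∏ i ∈ s, (x i + y i) ^ w i ≤ ∑ i ∈ s, w i * (z i / (x i + y i)) :=
    fun z hz => by
      rw [← prod_div_distrib, ← prod_congr rfl fun i hi =>
        Real.div_rpow (hz i hi) (hxy i hi).le (w i)]
      exact Real.geom_mean_le_arith_mean_weighted s w _ hw hw₁ fun i hi =>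
        div_nonneg (hz i hi) (hxy i hi).le
  have hsum : ∑ i ∈ s, w i * (x i / (x i + y i)) + ∑ i ∈ s, w i * (y i / (x i + y i)) = 1 := by
    rw [← sum_add_distrib, ← hw₁]
    refine sum_congr rfl fun i hi => ?_
    rw [← mul_add, ← add_div, div_self (hxy i hi).ne', mul_one]
  rw [← div_le_one hT, add_div]
  linarith [hgm x hx, hgm y fun i hi => (hy i hi).le]

lemma prod_mul_pow_rpow_inv {n : ℕ} (hn : n ≠ 0) {c : ℝ} (hc : 0 ≤ c) {z : Fin n → ℝ}
    (hz : ∀ i, 0 ≤ z i) : ∏ i, (c * z i ^ n) ^ ((1 : ℝ) / n) = c * ∏ i, z i := by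
  simp_rw [one_div, Real.mul_rpow hc (pow_nonneg (hz _) n), Real.pow_rpow_inv_natCast (hz _) hn,
    prod_mul_distrib, prod_const, card_univ, Fintype.card_fin,
    Real.rpow_inv_natCast_pow hc hn]

lemma one_add_mul_prod_rpow_le {n : ℕ} (hn : n ≠ 0) {a b : Fin n → ℝ} (ha : ∀ i, 0 ≤ a i)
    (hb : ∀ i, 0 ≤ b i) (hab : ∀ i, 1 + n * b i ^ (n + 1) ≤ (n + 1) * a i ^ n) :
    1 + n * (∏ i, b i) ^ (((n : ℝ) + 1) / n) ≤ (n + 1) * ∏ i, a i := by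
  have hn' : (n : ℝ) ≠ 0 := Nat.cast_ne_zero.mpr hn
  set c : Fin n → ℝ := fun i => b i ^ (((n : ℝ) + 1) / n)
  have hc : ∀ i, 0 ≤ c i := fun i => Real.rpow_nonneg (hb i) _
  have hcb : ∀ i, c i ^ n = b i ^ (n + 1) := fun i => by
    rw [← Real.rpow_natCast, ← Real.rpow_mul (hb i), div_mul_cancel₀ _ hn', ← Nat.cast_succ,
      Real.rpow_natCast]
  have hmahler := Real.prod_rpow_add_prod_rpow_le univ (w := fun _ => (1 : ℝ) / n)
    (x := fun i => n * c i ^ n) (y := fun _ => 1) (fun _ _ => by positivity)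
    (by simp [hn']) (fun i _ => by have := hc i; positivity) (fun _ _ => one_pos)
  simp only [Real.one_rpow, prod_const_one] at hmahler
  calc 1 + n * (∏ i, b i) ^ (((n : ℝ) + 1) / n)
      = ∏ i, (n * c i ^ n) ^ ((1 : ℝ) / n) + 1 := by
        rw [prod_mul_pow_rpow_inv hn (Nat.cast_nonneg n) hc,
          Real.finsetProd_rpow _ _ fun i _ => hb i, add_comm]
    _ ≤ ∏ i, (n * c i ^ n + 1) ^ ((1 : ℝ) / n) := hmahler
    _ ≤ ∏ i, ((n + 1) * a i ^ n) ^ ((1 : ℝ) / n) := by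
        refine prod_le_prod (fun i _ => by have := hc i; positivity) fun i _ => ?_
        refine Real.rpow_le_rpow (by have := hc i; positivity) ?_ (by positivity)
        rw [hcb, add_comm]
        exact hab i
    _ = (n + 1) * ∏ i, a i := prod_mul_pow_rpow_inv hn (by positivity) ha

lemma rpow_mul_le_add {N μ P Q : ℝ} (hN : 0 < N) (hμ : 0 ≤ μ) (hQ : 0 ≤ Q)
    (h : 1 + N * Q ^ ((N + 1) / N) ≤ (N + 1) * P) :
    (1 + (N + 1) * μ) ^ (1 / (N + 1)) * Q ≤ P + μ := by
  set W := Q ^ ((N + 1) / N)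
  have hQW : Q = W ^ (N / (N + 1)) := by
    rw [← Real.rpow_mul hQ, show (N + 1) / N * (N / (N + 1)) = 1 by field_simp, Real.rpow_one]
  have hamgm := Real.geom_mean_le_arith_mean2_weighted (w₁ := 1 / (N + 1)) (w₂ := N / (N + 1))
    (p₁ := 1 + (N + 1) * μ) (p₂ := W) (by positivity) (by positivity) (by positivity)
    (Real.rpow_nonneg hQ _) (by field_simp; ring)
  rw [← hQW] at hamgm
  calc (1 + (N + 1) * μ) ^ (1 / (N + 1)) * Q
      ≤ 1 / (N + 1) * (1 + (N + 1) * μ) + N / (N + 1) * W := hamgm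
    _ = μ + (1 + N * W) / (N + 1) := by field_simp; ring
    _ ≤ P + μ := by
        rw [add_comm P, add_le_add_iff_left, div_le_iff₀ (by positivity)]
        linarith

theorem stmt_1 (Δ : ℕ) (hΔ : 1 ≤ Δ) (d : Fin Δ → ℕ)
    (hd : ∀ i, 1 ≤ d i ∧ d i ≤ Δ)
    (lam0 : ℝ) (lam : Fin Δ → ℝ) (h0 : 0 ≤ lam0) (h : ∀ i, 0 ≤ lam i) :
    (∏ i, (1 + (d i : ℝ) * lam i) ^ ((1 : ℝ) / (d i : ℝ))) + lam0
    ≥ (1 + ((Δ : ℝ) + 1) * lam0) ^ ((1 : ℝ) / ((Δ : ℝ) + 1)) *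
      ∏ i, (1 + ((d i : ℝ) + 1) * lam i) ^ ((1 : ℝ) / ((d i : ℝ) + 1)) := by
  have hΔ0 : Δ ≠ 0 := Nat.one_le_iff_ne_zero.mp hΔ
  refine rpow_mul_le_add (by positivity) h0 (prod_nonneg fun i _ => by have := h i; positivity) ?_
  exact one_add_mul_prod_rpow_le hΔ0 (fun i => by have := h i; positivity)
    (fun i => by have := h i; positivity)
    fun i => one_add_mul_pow_succ_le (hd i).1 (hd i).2 (h i)
end

section
/- For integers Δ ≥ 1 and 1 ≤ d ≤ Δ, and every real λ ≥ 0, one has (Δ+1)(1 + dλ)^{Δ/d} ≥ 1 + Δ(1 + (d+1)λ)^{(Δ+1)/(d+1)}. -/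
/-!
Put `f x = (Δ + k) (1 + d x)^(Δ/d) - Δ (1 + (d + k) x)^((Δ + k)/(d + k))`, so that `f 0 = k`.
Since `d · (Δ/d) = Δ` and `(d + k) · (Δ + k)/(d + k) = Δ + k`, the derivative is
`f' x = Δ (Δ + k) ((1 + d x)^((Δ - d)/d) - (1 + (d + k) x)^((Δ - d)/(d + k)))`, which is
nonnegative because `t ↦ (1 + t x)^(1/t)` is antitone for `x ≥ 0`: by Bernoulli's inequality
with exponent `s/t ≤ 1`, `(1 + t x)^(s/t) ≤ 1 + s x`. Hence `f` is monotone on `[0, ∞)`.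
-/

open Real Set

lemma one_add_mul_rpow_div_le {s t x r : ℝ} (hs : 0 < s) (hst : s ≤ t) (hx : 0 ≤ x)
    (hr : 0 ≤ r) : (1 + t * x) ^ (r / t) ≤ (1 + s * x) ^ (r / s) := by
  have ht : 0 < t := hs.trans_le hst
  have hbernoulli : (1 + t * x) ^ (s / t) ≤ 1 + s * x := by
    have := rpow_one_add_le_one_add_mul_self (by nlinarith : -1 ≤ t * x)
      (div_nonneg hs.le ht.le) (div_le_one_of_le₀ hst ht.le)
    exact this.trans_eq (by field_simp)
  calc (1 + t * x) ^ (r / t) = ((1 + t * x) ^ (s / t)) ^ (r / s) := by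
        rw [← rpow_mul (by positivity)]
        field_simp
    _ ≤ (1 + s * x) ^ (r / s) := rpow_le_rpow (by positivity) hbernoulli (by positivity)

lemma hasDerivAt_one_add_mul_rpow_div {c r x : ℝ} (hc : c ≠ 0) (hx : 0 < 1 + c * x) :
    HasDerivAt (fun y ↦ (1 + c * y) ^ (r / c)) (r * (1 + c * x) ^ ((r - c) / c)) x := by
  have hlin : HasDerivAt (fun y ↦ 1 + c * y) c x := by
    simpa using ((hasDerivAt_id x).const_mul c).const_add 1
  convert hlin.rpow_const (p := r / c) (Or.inl hx.ne') using 1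
  rw [mul_div_cancel₀ _ hc, sub_div, div_self hc]

theorem add_mul_one_add_mul_rpow_le {Δ d k x : ℝ} (hd : 0 < d) (hdΔ : d ≤ Δ) (hk : 0 ≤ k)
    (hx : 0 ≤ x) :
    k + Δ * (1 + (d + k) * x) ^ ((Δ + k) / (d + k)) ≤ (Δ + k) * (1 + d * x) ^ (Δ / d) := by
  set f : ℝ → ℝ := fun y ↦
    (Δ + k) * (1 + d * y) ^ (Δ / d) - Δ * (1 + (d + k) * y) ^ ((Δ + k) / (d + k))
  set f' : ℝ → ℝ := fun y ↦
    (Δ + k) * (Δ * (1 + d * y) ^ ((Δ - d) / d)) -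
      Δ * ((Δ + k) * (1 + (d + k) * y) ^ ((Δ + k - (d + k)) / (d + k)))
  have hf : ∀ y ∈ Ici (0 : ℝ), HasDerivAt f (f' y) y := fun y (hy : 0 ≤ y) ↦
    ((hasDerivAt_one_add_mul_rpow_div hd.ne' (by positivity)).const_mul _).sub
      ((hasDerivAt_one_add_mul_rpow_div (by positivity) (by positivity)).const_mul _)
  have hf'_nonneg : ∀ y ∈ Ici (0 : ℝ), 0 ≤ f' y := fun y (hy : 0 ≤ y) ↦ by
    have := one_add_mul_rpow_div_le hd (le_add_of_nonneg_right hk) hy (sub_nonneg.2 hdΔ)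
    simp only [f', add_sub_add_right_eq_sub]
    nlinarith [mul_nonneg (hd.le.trans hdΔ) (by linarith : 0 ≤ Δ + k)]
  have hmono : MonotoneOn f (Ici 0) := by
    exact monotoneOn_of_hasDerivWithinAt_nonneg (convex_Ici 0)
      (fun y hy ↦ (hf y hy).continuousAt.continuousWithinAt)
      (fun y hy ↦ (hf y (interior_subset hy)).hasDerivWithinAt)
      (fun y hy ↦ hf'_nonneg y (interior_subset hy))
  have := hmono self_mem_Ici hx hx
  simp only [f, mul_zero, add_zero, one_rpow, mul_one] at this
  linarith

theorem stmt_2_general (Δ d : ℕ) (hd1 : 1 ≤ d) (hdΔ : d ≤ Δ)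
    (lam : ℝ) (hlam : 0 ≤ lam) :
    ((Δ : ℝ) + 1) * (1 + (d : ℝ) * lam) ^ ((Δ : ℝ) / (d : ℝ))
    ≥ 1 + (Δ : ℝ) * (1 + ((d : ℝ) + 1) * lam) ^ (((Δ : ℝ) + 1) / ((d : ℝ) + 1)) :=
  add_mul_one_add_mul_rpow_le (by exact_mod_cast hd1) (by exact_mod_cast hdΔ) zero_le_one hlam

theorem stmt_2 (Δ d : ℕ) (hΔ : 1 ≤ Δ) (hd1 : 1 ≤ d) (hdΔ : d ≤ Δ)
    (lam : ℝ) (hlam : 0 ≤ lam) :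
    ((Δ : ℝ) + 1) * (1 + (d : ℝ) * lam) ^ ((Δ : ℝ) / (d : ℝ))
    ≥ 1 + (Δ : ℝ) * (1 + ((d : ℝ) + 1) * lam) ^ (((Δ : ℝ) + 1) / ((d : ℝ) + 1)) :=
  stmt_2_general Δ d hd1 hdΔ lam hlam
end

section
/- For every integer d ≥ 2, the function (x,y) ↦ ((d+1)d·xy + (d+1)(x+y) + 1)^{1/(d+1)} is concave on any convex subset of {(x,y) ∈ ℝ² : (d+1)d·xy + (d+1)(x+y) + 1 > 0}. -/
/-!
With `c = d`, the affine substitution `u = (c + 1) (x + 1/c)`, `v = c y + 1` turns the quadratic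
into `u v - 1/c`. For `m ≥ 0`, a convex set on which `u v > m` stays in one branch of the
hyperbola `u v = m`, and on that branch the Lorentzian form `u v - m w²` satisfies the
reverse Cauchy–Schwarz inequality; expanding the form at `a p + b q` shows that this is exactly
concavity of `√(u v - m)`. Finally `A ^ (1/(d+1)) = (√A) ^ (2/(d+1))`, and `t ↦ t ^ (2/(d+1))`
is concave and increasing because `d ≥ 1`.
-/

open Set

theorem IsPreconnected.mul_pos_of_ne_zero {X : Type*} [TopologicalSpace X] {s : Set X}
    (hs : IsPreconnected s) {f : X → ℝ} (hf : ContinuousOn f s) (hf₀ : ∀ x ∈ s, f x ≠ 0)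
    {x y : X} (hx : x ∈ s) (hy : y ∈ s) : 0 < f x * f y := by
  by_contra! h
  obtain ⟨z, hz, hfz⟩ : (0 : ℝ) ∈ f '' s := by
    rcases mul_nonpos_iff.1 h with ⟨hx₀, hy₀⟩ | ⟨hx₀, hy₀⟩
    · exact hs.intermediate_value hy hx hf ⟨hy₀, hx₀⟩
    · exact hs.intermediate_value hx hy hf ⟨hx₀, hy₀⟩
  exact hf₀ z hz hfz

theorem ConcaveOn.rpow {E : Type*} [AddCommMonoid E] [Module ℝ E] {s : Set E} {f : E → ℝ}
    (hf : ConcaveOn ℝ s f) (hf₀ : ∀ x ∈ s, 0 ≤ f x) {r : ℝ} (hr₀ : 0 ≤ r) (hr₁ : r ≤ 1) :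
    ConcaveOn ℝ s (fun x => f x ^ r) := by
  refine ⟨hf.1, fun x hx y hy a b ha hb hab => ?_⟩
  calc a • f x ^ r + b • f y ^ r ≤ (a • f x + b • f y) ^ r :=
        (Real.concaveOn_rpow hr₀ hr₁).2 (hf₀ x hx) (hf₀ y hy) ha hb hab
    _ ≤ f (a • x + b • y) ^ r := by
        refine Real.rpow_le_rpow ?_ (hf.2 hx hy ha hb hab) hr₀
        exact add_nonneg (mul_nonneg ha (hf₀ x hx)) (mul_nonneg hb (hf₀ y hy))

theorem two_mul_add_le_add_of_mul_eq {a b s t m : ℝ} (hm : 0 ≤ m) (ha : 0 < a) (hb : 0 < b)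
    (hs : 0 ≤ s) (ht : 0 ≤ t) (h : a * b = (s ^ 2 + m) * (t ^ 2 + m)) :
    2 * (s * t + m) ≤ a + b := by
  refine (pow_le_pow_iff_left₀ (by positivity) (by positivity) two_ne_zero).1 ?_
  calc (2 * (s * t + m)) ^ 2 ≤ 4 * ((s ^ 2 + m) * (t ^ 2 + m)) := by
        nlinarith [mul_nonneg hm (sq_nonneg (s - t))]
    _ = 4 * (a * b) := by rw [h]
    _ ≤ (a + b) ^ 2 := by nlinarith [sq_nonneg (a - b)]

theorem concaveOn_sqrt_fst_mul_snd_sub {m : ℝ} {s : Set (ℝ × ℝ)} (hm : 0 ≤ m)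
    (hs : Convex ℝ s) (hsub : s ⊆ {p | m < p.1 * p.2}) :
    ConcaveOn ℝ s (fun p => √(p.1 * p.2 - m)) := by
  have hfst : ∀ r ∈ s, r.1 ≠ 0 := fun r hr hr₀ => by
    have : m < r.1 * r.2 := hsub hr
    rw [hr₀, zero_mul] at this
    linarith
  refine ⟨hs, ?_⟩
  rintro ⟨u₁, v₁⟩ hp ⟨u₂, v₂⟩ hq a b ha hb hab
  have hp' : m < u₁ * v₁ := hsub hp
  have hq' : m < u₂ * v₂ := hsub hq
  have hu : 0 < u₁ * u₂ :=
    hs.isPreconnected.mul_pos_of_ne_zero continuous_fst.continuousOn hfst hp hq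
  have h₁₂ : 0 < u₁ * v₂ :=
    pos_of_mul_pos_left ((mul_pos hu (hm.trans_lt hq')).trans_eq (by ring)) (mul_self_nonneg u₂)
  have h₂₁ : 0 < u₂ * v₁ :=
    pos_of_mul_pos_left ((mul_pos hu (hm.trans_lt hp')).trans_eq (by ring)) (mul_self_nonneg u₁)
  set x := √(u₁ * v₁ - m)
  set y := √(u₂ * v₂ - m)
  have hx : x ^ 2 = u₁ * v₁ - m := Real.sq_sqrt (by linarith)
  have hy : y ^ 2 = u₂ * v₂ - m := Real.sq_sqrt (by linarith)
  have key : 2 * (x * y + m) ≤ u₁ * v₂ + u₂ * v₁ :=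
    two_mul_add_le_add_of_mul_eq hm h₁₂ h₂₁ (Real.sqrt_nonneg _) (Real.sqrt_nonneg _)
      (by rw [hx, hy]; ring)
  have expand : (a * u₁ + b * u₂) * (a * v₁ + b * v₂) - m - (a * x + b * y) ^ 2
      = a * b * (u₁ * v₂ + u₂ * v₁ - 2 * (x * y + m)) := by
    linear_combination (-a ^ 2) * hx + (-b ^ 2) * hy + m * (a + b + 1) * hab
  simp only [Prod.smul_mk, Prod.mk_add_mk, smul_eq_mul]
  refine Real.le_sqrt_of_sq_le (sub_nonneg.1 ?_)
  rw [expand]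
  exact mul_nonneg (mul_nonneg ha hb) (sub_nonneg.2 key)

theorem concaveOn_sqrt_quadratic {c : ℝ} (hc : 0 < c) {s : Set (ℝ × ℝ)} (hs : Convex ℝ s)
    (hsub : s ⊆ {p | 0 < (c + 1) * c * (p.1 * p.2) + (c + 1) * (p.1 + p.2) + 1}) :
    ConcaveOn ℝ s (fun p => √((c + 1) * c * (p.1 * p.2) + (c + 1) * (p.1 + p.2) + 1)) := by
  let g : ℝ × ℝ →ᵃ[ℝ] ℝ × ℝ :=
    (LinearMap.prodMap ((c + 1) • LinearMap.id) (c • LinearMap.id)).toAffineMap +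
      AffineMap.const ℝ (ℝ × ℝ) ((c + 1) / c, 1)
  have hg : ∀ p, (g p).1 * (g p).2 - c⁻¹ =
      (c + 1) * c * (p.1 * p.2) + (c + 1) * (p.1 + p.2) + 1 := by
    intro p
    simp only [g, AffineMap.coe_add, LinearMap.coe_toAffineMap, AffineMap.coe_const, Pi.add_apply,
      LinearMap.prodMap_apply, LinearMap.smul_apply, LinearMap.id_coe, id_eq, smul_eq_mul,
      Function.const_apply, Prod.mk_add_mk]
    field_simp
    ring
  have himage : g '' s ⊆ {p | c⁻¹ < p.1 * p.2} := by
    rintro _ ⟨p, hp, rfl⟩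
    have : 0 < (g p).1 * (g p).2 - c⁻¹ := (hg p).symm ▸ hsub hp
    exact sub_pos.1 this
  have hconc := (concaveOn_sqrt_fst_mul_snd_sub (inv_nonneg.2 hc.le) (hs.affine_image g)
    himage).comp_affineMap g
  exact (hconc.subset (subset_preimage_image g s) hs).congr fun p _ => by
    simp only [Function.comp_apply, hg]

theorem stmt_8 (d : ℕ) (hd : 2 ≤ d) (s : Set (ℝ × ℝ)) (hconv : Convex ℝ s)
    (hs : s ⊆ {p : ℝ × ℝ |
      0 < ((d : ℝ) + 1) * (d : ℝ) * (p.1 * p.2) + ((d : ℝ) + 1) * (p.1 + p.2) + 1}) :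
    ConcaveOn ℝ s (fun p : ℝ × ℝ =>
      (((d : ℝ) + 1) * (d : ℝ) * (p.1 * p.2) + ((d : ℝ) + 1) * (p.1 + p.2) + 1) ^
        ((1 : ℝ) / ((d : ℝ) + 1))) := by
  have hd₁ : (1 : ℝ) ≤ d := by exact_mod_cast one_le_two.trans hd
  have hr : 2 / ((d : ℝ) + 1) ≤ 1 := (div_le_one (by linarith)).2 (by linarith)
  refine ((concaveOn_sqrt_quadratic (by linarith) hconv hs).rpow
    (fun _ _ => Real.sqrt_nonneg _) (by positivity) hr).congr ?_
  intro p hp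
  dsimp only
  rw [Real.sqrt_eq_rpow, ← Real.rpow_mul (hs hp).le]
  congr 1
  ring
end

section
/- For every integer d ≥ 2, the set S_d := {(a_0,a_1,a_2) ∈ (ℝ_{>0})³ : a_0 + a_1 x + a_2 y ≥ ((d+1)d·xy + (d+1)(x+y) + 1)^{1/(d+1)} for all x,y ≥ 0} is log-convex: if (a_0,a_1,a_2) and (b_0,b_1,b_2) lie in S_d, then (√(a_0b_0), √(a_1b_1), √(a_2b_2)) also lies in S_d. -/
/-!
Write `F(x, y) = (d+1)d·xy + (d+1)(x+y) + 1`. Since `F` has nonnegative coefficients,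
Cauchy–Schwarz gives `F(x, y)² ≤ F(sx, ty) · F(x/s, y/t)` for all `s, t > 0`, and this
survives taking the power `1/(d+1)`. Given dominating triples `a` and `b`, choose `s, t` so that
the affine forms `a₀ + a₁(sx) + a₂(ty)` and `b₀ + b₁(x/s) + b₂(y/t)` become reciprocal multiples
of `√(a₀b₀) + √(a₁b₁)x + √(a₂b₂)y`; multiplying the two bounds and taking square roots gives
the claim.
-/

/-- Midpoint convexity of `(u, v) ↦ log f(eᵘ, eᵛ)`, written multiplicatively: the point
`(x, y)` is the geometric mean of `(s * x, t * y)` and `(x / s, y / t)`. -/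
def IsGeomMidLogConvex (f : ℝ → ℝ → ℝ) : Prop :=
  ∀ ⦃x y s t : ℝ⦄, 0 ≤ x → 0 ≤ y → 0 < s → 0 < t →
    f x y ^ 2 ≤ f (s * x) (t * y) * f (x / s) (y / t)

theorem isGeomMidLogConvex_bilinear {c e : ℝ} (hc : 0 ≤ c) (he : 0 ≤ e) :
    IsGeomMidLogConvex fun x y => c * (x * y) + e * (x + y) + 1 := by
  intro x y s t hx hy hs ht
  rw [← sub_nonneg]
  have sos : (c * (s * x * (t * y)) + e * (s * x + t * y) + 1) *
        (c * (x / s * (y / t)) + e * (x / s + y / t) + 1) - (c * (x * y) + e * (x + y) + 1) ^ 2 =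
      (c * e * s * (x ^ 2 * y) * (t - 1) ^ 2 + c * e * t * (x * y ^ 2) * (s - 1) ^ 2
        + c * (x * y) * (s * t - 1) ^ 2 + e ^ 2 * (x * y) * (s - t) ^ 2
        + e * t * x * (s - 1) ^ 2 + e * s * y * (t - 1) ^ 2) / (s * t) := by
    field_simp
    ring
  rw [sos]
  positivity

theorem IsGeomMidLogConvex.rpow {f : ℝ → ℝ → ℝ} (hf : IsGeomMidLogConvex f)
    (hf₀ : ∀ x y, 0 ≤ x → 0 ≤ y → 0 ≤ f x y) {p : ℝ} (hp : 0 ≤ p) :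
    IsGeomMidLogConvex fun x y => f x y ^ p := by
  intro x y s t hx hy hs ht
  have h₁ := hf₀ (s * x) (t * y) (by positivity) (by positivity)
  have h₂ := hf₀ (x / s) (y / t) (by positivity) (by positivity)
  calc (f x y ^ p) ^ 2 = (f x y ^ 2) ^ p := Real.rpow_pow_comm (hf₀ x y hx hy) p 2
    _ ≤ (f (s * x) (t * y) * f (x / s) (y / t)) ^ p :=
      Real.rpow_le_rpow (by positivity) (hf hx hy hs ht) hp
    _ = f (s * x) (t * y) ^ p * f (x / s) (y / t) ^ p := Real.mul_rpow h₁ h₂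

/-- With `s = α₀β₁ / (α₁β₀)` and `t = α₀β₂ / (α₂β₀)` the two affine forms equal
`(α₀/β₀) G` and `(β₀/α₀) G` for `G = α₀β₀ + α₁β₁x + α₂β₂y`. -/
theorem affine_mul_affine_rescaled {α₀ α₁ α₂ β₀ β₁ β₂ : ℝ} (hα₀ : α₀ ≠ 0) (hβ₀ : β₀ ≠ 0)
    (x y : ℝ) :
    (α₀ ^ 2 + α₁ ^ 2 * (α₀ * β₁ / (α₁ * β₀) * x) + α₂ ^ 2 * (α₀ * β₂ / (α₂ * β₀) * y)) *
        (β₀ ^ 2 + β₁ ^ 2 * (x / (α₀ * β₁ / (α₁ * β₀))) + β₂ ^ 2 * (y / (α₀ * β₂ / (α₂ * β₀)))) =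
      (α₀ * β₀ + α₁ * β₁ * x + α₂ * β₂ * y) ^ 2 := by
  field_simp

theorem IsGeomMidLogConvex.le_sqrt_mul_affine {f : ℝ → ℝ → ℝ} (hf : IsGeomMidLogConvex f)
    (hf₀ : ∀ x y, 0 ≤ x → 0 ≤ y → 0 ≤ f x y) {a₀ a₁ a₂ b₀ b₁ b₂ : ℝ}
    (ha : 0 < a₀ ∧ 0 < a₁ ∧ 0 < a₂) (hb : 0 < b₀ ∧ 0 < b₁ ∧ 0 < b₂)
    (hA : ∀ x y, 0 ≤ x → 0 ≤ y → f x y ≤ a₀ + a₁ * x + a₂ * y)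
    (hB : ∀ x y, 0 ≤ x → 0 ≤ y → f x y ≤ b₀ + b₁ * x + b₂ * y)
    {x y : ℝ} (hx : 0 ≤ x) (hy : 0 ≤ y) :
    f x y ≤ √(a₀ * b₀) + √(a₁ * b₁) * x + √(a₂ * b₂) * y := by
  have sqrt_pos_sq {a : ℝ} (ha : 0 < a) : ∃ α, 0 < α ∧ α ^ 2 = a :=
    ⟨√a, Real.sqrt_pos.2 ha, Real.sq_sqrt ha.le⟩
  obtain ⟨⟨α₀, hα₀, rfl⟩, ⟨α₁, hα₁, rfl⟩, ⟨α₂, hα₂, rfl⟩⟩ :=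
    And.imp sqrt_pos_sq (And.imp sqrt_pos_sq sqrt_pos_sq) ha
  obtain ⟨⟨β₀, hβ₀, rfl⟩, ⟨β₁, hβ₁, rfl⟩, ⟨β₂, hβ₂, rfl⟩⟩ :=
    And.imp sqrt_pos_sq (And.imp sqrt_pos_sq sqrt_pos_sq) hb
  rw [← mul_pow, ← mul_pow, ← mul_pow, Real.sqrt_sq (by positivity), Real.sqrt_sq (by positivity),
    Real.sqrt_sq (by positivity)]
  set s := α₀ * β₁ / (α₁ * β₀)
  set t := α₀ * β₂ / (α₂ * β₀)
  refine le_of_sq_le_sq ?_ (by positivity)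
  calc f x y ^ 2 ≤ f (s * x) (t * y) * f (x / s) (y / t) := hf hx hy (by positivity) (by positivity)
    _ ≤ (α₀ ^ 2 + α₁ ^ 2 * (s * x) + α₂ ^ 2 * (t * y)) *
          (β₀ ^ 2 + β₁ ^ 2 * (x / s) + β₂ ^ 2 * (y / t)) :=
      mul_le_mul (hA _ _ (by positivity) (by positivity)) (hB _ _ (by positivity) (by positivity))
        (hf₀ _ _ (by positivity) (by positivity)) (by positivity)
    _ = (α₀ * β₀ + α₁ * β₁ * x + α₂ * β₂ * y) ^ 2 :=
      affine_mul_affine_rescaled hα₀.ne' hβ₀.ne' x y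

theorem stmt_10_general (d : ℕ)
    (a₀ a₁ a₂ b₀ b₁ b₂ : ℝ)
    (ha : 0 < a₀ ∧ 0 < a₁ ∧ 0 < a₂) (hb : 0 < b₀ ∧ 0 < b₁ ∧ 0 < b₂)
    (hA : ∀ x y : ℝ, 0 ≤ x → 0 ≤ y →
      a₀ + a₁ * x + a₂ * y ≥
        (((d : ℝ) + 1) * (d : ℝ) * (x * y) + ((d : ℝ) + 1) * (x + y) + 1) ^
          ((1 : ℝ) / ((d : ℝ) + 1)))
    (hB : ∀ x y : ℝ, 0 ≤ x → 0 ≤ y →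
      b₀ + b₁ * x + b₂ * y ≥
        (((d : ℝ) + 1) * (d : ℝ) * (x * y) + ((d : ℝ) + 1) * (x + y) + 1) ^
          ((1 : ℝ) / ((d : ℝ) + 1))) :
    ∀ x y : ℝ, 0 ≤ x → 0 ≤ y →
      Real.sqrt (a₀ * b₀) + Real.sqrt (a₁ * b₁) * x + Real.sqrt (a₂ * b₂) * y ≥
        (((d : ℝ) + 1) * (d : ℝ) * (x * y) + ((d : ℝ) + 1) * (x + y) + 1) ^
          ((1 : ℝ) / ((d : ℝ) + 1)) := by
  intro x y hx hy
  have hF₀ : ∀ x y : ℝ, 0 ≤ x → 0 ≤ y →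
      0 ≤ ((d : ℝ) + 1) * (d : ℝ) * (x * y) + ((d : ℝ) + 1) * (x + y) + 1 := by
    intro x y hx hy
    positivity
  have hF : IsGeomMidLogConvex fun x y =>
      (((d : ℝ) + 1) * (d : ℝ) * (x * y) + ((d : ℝ) + 1) * (x + y) + 1) ^
        ((1 : ℝ) / ((d : ℝ) + 1)) :=
    (isGeomMidLogConvex_bilinear (by positivity) (by positivity)).rpow hF₀ (by positivity)
  exact hF.le_sqrt_mul_affine (fun x y hx hy => Real.rpow_nonneg (hF₀ x y hx hy) _) ha hb hA hB
    hx hy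

theorem stmt_10 (d : ℕ) (hd : 2 ≤ d)
    (a₀ a₁ a₂ b₀ b₁ b₂ : ℝ)
    (ha : 0 < a₀ ∧ 0 < a₁ ∧ 0 < a₂) (hb : 0 < b₀ ∧ 0 < b₁ ∧ 0 < b₂)
    (hA : ∀ x y : ℝ, 0 ≤ x → 0 ≤ y →
      a₀ + a₁ * x + a₂ * y ≥
        (((d : ℝ) + 1) * (d : ℝ) * (x * y) + ((d : ℝ) + 1) * (x + y) + 1) ^
          ((1 : ℝ) / ((d : ℝ) + 1)))
    (hB : ∀ x y : ℝ, 0 ≤ x → 0 ≤ y →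
      b₀ + b₁ * x + b₂ * y ≥
        (((d : ℝ) + 1) * (d : ℝ) * (x * y) + ((d : ℝ) + 1) * (x + y) + 1) ^
          ((1 : ℝ) / ((d : ℝ) + 1))) :
    ∀ x y : ℝ, 0 ≤ x → 0 ≤ y →
      Real.sqrt (a₀ * b₀) + Real.sqrt (a₁ * b₁) * x + Real.sqrt (a₂ * b₂) * y ≥
        (((d : ℝ) + 1) * (d : ℝ) * (x * y) + ((d : ℝ) + 1) * (x + y) + 1) ^
          ((1 : ℝ) / ((d : ℝ) + 1)) :=
  stmt_10_general d a₀ a₁ a₂ b₀ b₁ b₂ ha hb hA hB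
end

section
/- Let d ≥ 1 be an integer and x, y ≥ 0 reals. Then (dx+1)^{d+1} (dy+1)^{d+1} ≤ ((d+1)d·xy + (d+1)(x+y) + 1)^{2d}, with equality if and only if x = y = 0. -/
theorem stmt_11 (d : ℕ) (hd : 1 ≤ d) (x y : ℝ) (hx : 0 ≤ x) (hy : 0 ≤ y) :
    ((d : ℝ) * x + 1) ^ (d + 1) * ((d : ℝ) * y + 1) ^ (d + 1) ≤
      (((d : ℝ) + 1) * (d : ℝ) * (x * y) + ((d : ℝ) + 1) * (x + y) + 1) ^ (2 * d)
    ∧ (((d : ℝ) * x + 1) ^ (d + 1) * ((d : ℝ) * y + 1) ^ (d + 1) =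
        (((d : ℝ) + 1) * (d : ℝ) * (x * y) + ((d : ℝ) + 1) * (x + y) + 1) ^ (2 * d)
      ↔ x = 0 ∧ y = 0) := by
  have hd1 : (1:ℝ) ≤ (d:ℝ) := by exact_mod_cast hd
  set s : ℝ := (d:ℝ) * x * y + x + y with hs_def
  have hxy : 0 ≤ (d:ℝ) * x * y := by positivity
  have hs : 0 ≤ s := by rw [hs_def]; positivity
  have hL : ((d : ℝ) * x + 1) ^ (d + 1) * ((d : ℝ) * y + 1) ^ (d + 1)
      = ((d:ℝ) * s + 1) ^ (d + 1) := by
    rw [← mul_pow]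
    congr 1
    rw [hs_def]; ring
  have hR : ((d : ℝ) + 1) * (d : ℝ) * (x * y) + ((d : ℝ) + 1) * (x + y) + 1
      = ((d:ℝ) + 1) * s + 1 := by rw [hs_def]; ring
  have h1 : (0:ℝ) ≤ (d:ℝ) * s + 1 := by positivity
  have hbase : (d:ℝ) * s + 1 ≤ ((d:ℝ) + 1) * s + 1 := by nlinarith
  have hge1 : (1:ℝ) ≤ ((d:ℝ) + 1) * s + 1 := by nlinarith
  have hexp : d + 1 ≤ 2 * d := by omega
  have hineq : ((d:ℝ) * s + 1) ^ (d + 1) ≤ (((d:ℝ) + 1) * s + 1) ^ (2 * d) :=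
    le_trans (pow_le_pow_left₀ h1 hbase _) (pow_le_pow_right₀ hge1 hexp)
  refine ⟨by rw [hL, hR]; exact hineq, ?_, ?_⟩
  · intro heq
    rw [hL, hR] at heq
    have hs0 : s = 0 := by
      by_contra hne
      have hspos : 0 < s := lt_of_le_of_ne hs (Ne.symm hne)
      have hstrict : ((d:ℝ) * s + 1) ^ (d + 1) < (((d:ℝ) + 1) * s + 1) ^ (d + 1) :=
        pow_lt_pow_left₀ (by nlinarith) h1 (by omega)
      have := lt_of_lt_of_le hstrict (pow_le_pow_right₀ hge1 hexp)
      linarith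
    have hs0' : (d:ℝ) * x * y + x + y = 0 := by rw [← hs_def]; exact hs0
    constructor <;> linarith
  · rintro ⟨rfl, rfl⟩
    norm_num
end

section
/- For every integer d ≥ 1 and every real t ≥ 0, one has (dt+1)^{d+1} ≤ ((d+1)t + 1)^{2d}. -/
theorem stmt_12 (d : ℕ) (hd : 1 ≤ d) (t : ℝ) (ht : 0 ≤ t) :
    ((d : ℝ) * t + 1) ^ (d + 1) ≤ (((d : ℝ) + 1) * t + 1) ^ (2 * d) := by
  have h1 : (0:ℝ) ≤ (d : ℝ) * t + 1 := by positivity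
  have h2 : ((d : ℝ) * t + 1) ≤ (((d : ℝ) + 1) * t + 1) := by nlinarith
  have h3 : (1:ℝ) ≤ (((d : ℝ) + 1) * t + 1) := by nlinarith [Nat.cast_nonneg (α := ℝ) d]
  calc ((d : ℝ) * t + 1) ^ (d + 1) ≤ (((d : ℝ) + 1) * t + 1) ^ (d + 1) :=
        pow_le_pow_left₀ h1 h2 _
    _ ≤ (((d : ℝ) + 1) * t + 1) ^ (2 * d) := pow_le_pow_right₀ h3 (by omega)
end

section
/- Let Δ ≥ 2 be an integer and 0 < s < 1 a real. Then the polynomial f(X) = (Δ+1)s·X^{2Δ} − Δ·X^{Δ+1} − 1 has exactly one zero on the interval (0, ∞), and this zero is greater than 1. -/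
/-!
Dividing by `X ^ (Δ + 1)` turns `f` into `g X = (Δ + 1) s X ^ (Δ - 1) - Δ - X ^ (-(Δ + 1))`, which is
strictly increasing on `(0, ∞)`, so `f` has at most one positive zero. Since `f 0 = -1` and `f` is
eventually positive, there is one; and since `g 1 = (Δ + 1)(s - 1) < 0`, it lies beyond `1`.
-/

open Set

noncomputable section

def trinomial (a b : ℝ) (m n : ℕ) (x : ℝ) : ℝ := a * x ^ (m + n) - b * x ^ m - 1

def trinomialDiv (a b : ℝ) (m n : ℕ) (x : ℝ) : ℝ := a * x ^ n - b - (x ^ m)⁻¹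

end

section

variable {a b : ℝ} {m n : ℕ} {x : ℝ}

theorem trinomial_eq_pow_mul_trinomialDiv (hx : x ≠ 0) :
    trinomial a b m n x = x ^ m * trinomialDiv a b m n x := by
  have : x ^ m ≠ 0 := pow_ne_zero m hx
  simp only [trinomial, trinomialDiv, pow_add]
  field_simp

theorem trinomial_eq_zero_iff (hx : x ≠ 0) :
    trinomial a b m n x = 0 ↔ trinomialDiv a b m n x = 0 := by
  rw [trinomial_eq_pow_mul_trinomialDiv hx, mul_eq_zero, or_iff_right (pow_ne_zero m hx)]

theorem strictMonoOn_trinomialDiv (ha : 0 < a) (hn : n ≠ 0) :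
    StrictMonoOn (trinomialDiv a b m n) (Ioi 0) := by
  intro x hx y _ hxy
  have hpow_n : a * x ^ n < a * y ^ n := mul_lt_mul_of_pos_left (pow_lt_pow_left₀ hxy hx.le hn) ha
  have hinv : (y ^ m)⁻¹ ≤ (x ^ m)⁻¹ :=
    inv_anti₀ (pow_pos hx m) (pow_le_pow_left₀ hx.le hxy.le m)
  simp only [trinomialDiv]
  linarith

theorem continuous_trinomial : Continuous (trinomial a b m n) := by
  unfold trinomial
  fun_prop

theorem trinomial_nonneg_of_le (ha : 0 < a) (hn : n ≠ 0) (hx₁ : 1 ≤ x)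
    (hx : (b + 1) / a ≤ x) : 0 ≤ trinomial a b m n x := by
  have hxm : 1 ≤ x ^ m := one_le_pow₀ hx₁
  have hlead : x * x ^ m ≤ x ^ (m + n) := by
    rw [← pow_succ']
    exact pow_le_pow_right₀ hx₁ (by omega)
  have hbx : b + 1 ≤ a * x := by rwa [div_le_iff₀' ha] at hx
  have hmain : (b + 1) * x ^ m ≤ a * (x * x ^ m) := by
    rw [← mul_assoc]
    exact mul_le_mul_of_nonneg_right hbx (by positivity)
  simp only [trinomial]
  nlinarith

theorem exists_pos_trinomial_eq_zero (ha : 0 < a) (hb : 0 ≤ b) (hn : n ≠ 0) :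
    ∃ x, 0 < x ∧ trinomial a b m n x = 0 := by
  set M := max 1 ((b + 1) / a)
  have hM : 0 ≤ trinomial a b m n M :=
    trinomial_nonneg_of_le ha hn (le_max_left _ _) (le_max_right _ _)
  have h0 : trinomial a b m n 0 < 0 := by
    simp only [trinomial, zero_pow (by omega : m + n ≠ 0)]
    nlinarith [pow_nonneg (le_refl (0 : ℝ)) m]
  obtain ⟨x, hx, hfx⟩ := intermediate_value_Icc (by positivity : (0 : ℝ) ≤ M)
    continuous_trinomial.continuousOn ⟨h0.le, hM⟩
  refine ⟨x, lt_of_le_of_ne hx.1 ?_, hfx⟩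
  rintro rfl
  exact h0.ne hfx

theorem existsUnique_pos_trinomial_eq_zero (ha : 0 < a) (hb : 0 ≤ b) (hn : n ≠ 0) :
    ∃! x, 0 < x ∧ trinomial a b m n x = 0 := by
  obtain ⟨x, hx, hfx⟩ := exists_pos_trinomial_eq_zero ha hb hn
  refine ⟨x, ⟨hx, hfx⟩, fun y ⟨hy, hfy⟩ => ?_⟩
  refine (strictMonoOn_trinomialDiv (b := b) (m := m) ha hn).injOn hy hx ?_
  rw [(trinomial_eq_zero_iff hy.ne').1 hfy, (trinomial_eq_zero_iff hx.ne').1 hfx]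

theorem one_lt_of_trinomial_eq_zero (ha : 0 < a) (hn : n ≠ 0) (hab : a < b + 1) (hx : 0 < x)
    (hfx : trinomial a b m n x = 0) : 1 < x := by
  have hg₁ : trinomialDiv a b m n 1 < 0 := by
    simp only [trinomialDiv, one_pow, inv_one]
    linarith
  rw [← (trinomial_eq_zero_iff hx.ne').1 hfx] at hg₁
  exact ((strictMonoOn_trinomialDiv ha hn).lt_iff_lt (mem_Ioi.2 one_pos) hx).1 hg₁

end

theorem stmt_13 (Δ : ℕ) (hΔ : 2 ≤ Δ) (s : ℝ) (hs0 : 0 < s) (hs1 : s < 1) :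
    (∃! X : ℝ, 0 < X ∧ ((Δ : ℝ) + 1) * s * X ^ (2 * Δ) - (Δ : ℝ) * X ^ (Δ + 1) - 1 = 0)
    ∧ ∀ X : ℝ, 0 < X →
        ((Δ : ℝ) + 1) * s * X ^ (2 * Δ) - (Δ : ℝ) * X ^ (Δ + 1) - 1 = 0 → 1 < X := by
  have hdeg : 2 * Δ = (Δ + 1) + (Δ - 1) := by omega
  have hn : Δ - 1 ≠ 0 := by omega
  have ha : 0 < ((Δ : ℝ) + 1) * s := by positivity
  have hab : ((Δ : ℝ) + 1) * s < Δ + 1 := mul_lt_of_lt_one_right (by positivity) hs1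
  rw [hdeg]
  exact ⟨existsUnique_pos_trinomial_eq_zero ha Δ.cast_nonneg hn,
    fun X hX => one_lt_of_trinomial_eq_zero ha hn hab hX⟩
end

section
/- Let H be a finite edge-weighted graph (symmetric real matrix with nonnegative entries) whose eigenvalues μ_1 ≥ μ_2 ≥ ... ≥ μ_n satisfy μ_i ≤ 0 for all i ≥ 2 (antiferromagnetic). Then for every cycle C_ℓ of length ℓ ≥ 3, hom(C_ℓ, H) = ∑_i μ_i^ℓ ≥ (∑_i μ_i³)^{ℓ/3} = hom(K_3, H)^{ℓ/3}. -/
/-!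
Write `a` for the top eigenvalue. Since `tr H ≥ 0` and all other eigenvalues are nonpositive,
every eigenvalue satisfies `|μᵢ| ≤ a`; for `μᵢ ≤ 0` this gives `μᵢ^(ℓ-3) ≤ a^(ℓ-3)`, and
multiplying by `μᵢ^3 ≤ 0` yields `μᵢ^ℓ ≥ a^(ℓ-3) μᵢ^3`, which is an equality for `μᵢ = a`.
Summing, `∑ μᵢ^ℓ ≥ a^(ℓ-3) ∑ μᵢ^3`, and `0 ≤ ∑ μᵢ^3 = tr H^3 ≤ a^3` bounds `a^(ℓ-3)` below
by `(∑ μᵢ^3)^((ℓ-3)/3)`.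
-/

open Finset Matrix

lemma Matrix.IsHermitian.trace_pow_eq_sum_eigenvalues_pow {𝕜 n : Type*} [RCLike 𝕜] [Fintype n]
    [DecidableEq n] {A : Matrix n n 𝕜} (hA : A.IsHermitian) (k : ℕ) :
    (A ^ k).trace = ∑ i, (hA.eigenvalues i : 𝕜) ^ k := by
  conv_lhs => rw [hA.spectral_theorem, ← map_pow, Unitary.conjStarAlgAut_apply, trace_mul_comm,
    ← Matrix.mul_assoc, Unitary.coe_star_mul_self, Matrix.one_mul, diagonal_pow, trace_diagonal]
  simp

lemma Matrix.trace_pow_nonneg {n R : Type*} [Fintype n] [DecidableEq n] [Semiring R]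
    [PartialOrder R] [IsOrderedRing R] {A : Matrix n n R} (hA : ∀ i j, 0 ≤ A i j) (k : ℕ) :
    0 ≤ (A ^ k).trace :=
  sum_nonneg fun i _ => pow_apply_nonneg hA k i i

lemma mul_pow_three_le_pow_add_three {x a : ℝ} (hx : x ≤ 0) (hxa : -x ≤ a) (m : ℕ) :
    a ^ m * x ^ 3 ≤ x ^ (m + 3) := by
  have hxm : x ^ m ≤ a ^ m :=
    (le_abs_self _).trans <| (abs_pow x m).trans_le <|
      pow_le_pow_left₀ (abs_nonneg x) (abs_le.mpr ⟨by linarith, by linarith⟩) m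
  rw [pow_add]
  exact mul_le_mul_of_nonpos_right hxm (Odd.pow_nonpos (by decide) hx)

lemma sum_le_sum_pair_of_nonpos {ι : Type*} [Fintype ι] [DecidableEq ι] {f : ι → ℝ} {i₀ : ι}
    (hf : ∀ i, i ≠ i₀ → f i ≤ 0) (i : ι) : ∑ j, f j ≤ ∑ j ∈ {i₀, i}, f j :=
  calc ∑ j, f j = ∑ j ∈ univ \ {i₀, i}, f j + ∑ j ∈ {i₀, i}, f j :=
        (sum_sdiff (subset_univ _)).symm
    _ ≤ ∑ j ∈ {i₀, i}, f j := by
        refine add_le_of_nonpos_left (sum_nonpos fun j hj => hf j ?_)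
        rintro rfl
        simp at hj

theorem sum_pow_three_rpow_le_sum_pow {ι : Type*} [Fintype ι] {μ : ι → ℝ} {i₀ : ι}
    (hneg : ∀ i, i ≠ i₀ → μ i ≤ 0) (hsum : 0 ≤ ∑ i, μ i) (hcube : 0 ≤ ∑ i, μ i ^ 3)
    {ℓ : ℕ} (hℓ : 3 ≤ ℓ) :
    (∑ i, μ i ^ 3) ^ ((ℓ : ℝ) / 3) ≤ ∑ i, μ i ^ ℓ := by
  classical
  obtain ⟨m, rfl⟩ := Nat.exists_eq_add_of_le' hℓ
  set a := μ i₀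
  have hbound : ∀ i, i ≠ i₀ → -μ i ≤ a := fun i hi => by
    have := sum_le_sum_pair_of_nonpos hneg i
    rw [sum_pair hi.symm] at this
    linarith
  have ha : 0 ≤ a := by
    have := sum_le_sum_pair_of_nonpos hneg i₀
    simp only [mem_singleton, insert_eq_of_mem, sum_singleton] at this
    linarith
  have hcube_le : ∑ i, μ i ^ 3 ≤ a ^ 3 := by
    have := sum_le_sum_pair_of_nonpos (f := fun i => μ i ^ 3)
      (fun i hi => Odd.pow_nonpos (by decide) (hneg i hi)) i₀
    simpa using this
  have htermwise : ∀ i, a ^ m * μ i ^ 3 ≤ μ i ^ (m + 3) := fun i => by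
    by_cases hi : i = i₀
    · rw [hi, ← pow_add]
    · exact mul_pow_three_le_pow_add_three (hneg i hi) (hbound i hi) m
  calc (∑ i, μ i ^ 3) ^ ((↑(m + 3) : ℝ) / 3)
      = (∑ i, μ i ^ 3) ^ ((m : ℝ) / 3) * ∑ i, μ i ^ 3 := by
        rw [← Real.rpow_add_one' hcube (by positivity)]
        push_cast; ring_nf
    _ ≤ (a ^ 3) ^ ((m : ℝ) / 3) * ∑ i, μ i ^ 3 := by gcongr
    _ = a ^ m * ∑ i, μ i ^ 3 := by
        rw [← Real.rpow_natCast_mul ha]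
        norm_num [mul_div_cancel₀]
    _ ≤ ∑ i, μ i ^ (m + 3) := by
        rw [mul_sum]
        exact sum_le_sum fun i _ => htermwise i

theorem stmt_18 (n : ℕ) (H : Matrix (Fin n) (Fin n) ℝ) (hH : H.IsHermitian)
    (hnonneg : ∀ i j, 0 ≤ H i j)
    (hanti : ∃ i₀ : Fin n, ∀ i : Fin n, i ≠ i₀ → hH.eigenvalues i ≤ 0)
    (ℓ : ℕ) (hℓ : 3 ≤ ℓ) :
    (H ^ ℓ).trace = ∑ i, hH.eigenvalues i ^ ℓ
    ∧ ∑ i, hH.eigenvalues i ^ ℓ ≥ (∑ i, hH.eigenvalues i ^ 3) ^ ((ℓ : ℝ) / 3) := by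
  have htrace (k : ℕ) : (H ^ k).trace = ∑ i, hH.eigenvalues i ^ k := by
    simpa using hH.trace_pow_eq_sum_eigenvalues_pow k
  obtain ⟨i₀, hneg⟩ := hanti
  refine ⟨htrace ℓ, sum_pow_three_rpow_le_sum_pow hneg ?_ ?_ hℓ⟩
  · simpa using (htrace 1).symm.trans_ge (trace_pow_nonneg hnonneg 1)
  · exact htrace 3 ▸ trace_pow_nonneg hnonneg 3
end
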